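/- arXiv:2105.00208 — 6 statements merged into one kernel-verified Lean document; each statement's English description precedes it below -/
import Mathlib

section
/- Weak sequencing is associative at the level of sets of traces: for any sets of traces T1, T2, T3, (T1 ;w T2) ;w T3 = T1 ;w (T2 ;w T3). -/
universe u v
variable {A : Type u} {L : Type v}

/-- Trace `t` has a conflict with lifeline `l`: it contains an action occurring on `l`. -/
def Conflict (θ : A → L) (t : List A) (l : L) : Prop := ∃ a ∈ t, θ a = l

/-- `Interl t1 t2 t` : `t` is an interleaving of traces `t1` and `t2`. -/
inductive Interl : List A → List A → List A → Prop
  | nil_left (t : List A) : Interl [] t t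
  | nil_right (t : List A) : Interl t [] t
  | cons_left (a : A) {t1 t2 t : List A} : Interl t1 t2 t → Interl (a :: t1) t2 (a :: t)
  | cons_right (a : A) {t1 t2 t : List A} : Interl t1 t2 t → Interl t1 (a :: t2) (a :: t)

/-- `WeakSeq θ t1 t2 t` : `t` is a weak sequencing of `t1` and `t2`. -/
inductive WeakSeq (θ : A → L) : List A → List A → List A → Prop
  | nil_left (t : List A) : WeakSeq θ [] t t
  | nil_right (t : List A) : WeakSeq θ t [] t
  | cons_left (a : A) {t1 t2 t : List A} : WeakSeq θ t1 t2 t → WeakSeq θ (a :: t1) t2 (a :: t)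
  | cons_right (a : A) {t1 t2 t : List A} : WeakSeq θ t1 t2 t → ¬ Conflict θ t1 (θ a) →
      WeakSeq θ t1 (a :: t2) (a :: t)

/-- Interleaving of sets of traces. -/
def interlS (T1 T2 : Set (List A)) : Set (List A) :=
  {t | ∃ t1 ∈ T1, ∃ t2 ∈ T2, Interl t1 t2 t}

/-- Weak sequencing of sets of traces. -/
def weakS (θ : A → L) (T1 T2 : Set (List A)) : Set (List A) :=
  {t | ∃ t1 ∈ T1, ∃ t2 ∈ T2, WeakSeq θ t1 t2 t}

/-- Strict sequencing (concatenation) of sets of traces. -/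
def concatS (T1 T2 : Set (List A)) : Set (List A) :=
  {t | ∃ t1 ∈ T1, ∃ t2 ∈ T2, t = t1 ++ t2}

/-- Restricted version of a scheduling operator: the first action must come from the left. -/
def restr (op : Set (List A) → Set (List A) → Set (List A)) (T1 T2 : Set (List A)) :
    Set (List A) :=
  {t | t ∈ op T1 T2 ∧ ∀ a t', t = a :: t' → ∃ t1, a :: t1 ∈ T1 ∧ t ∈ op {t1} T2}

/-- Powers of a set of traces w.r.t. a scheduling operator. -/
def power (op : Set (List A) → Set (List A) → Set (List A)) (T : Set (List A)) :
    ℕ → Set (List A)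
  | 0 => {[]}
  | n + 1 => op T (power op T n)

/-- Kleene closure of a set of traces w.r.t. a scheduling operator. -/
def kleene (op : Set (List A) → Set (List A) → Set (List A)) (T : Set (List A)) :
    Set (List A) :=
  ⋃ n, power op T n


/-! Both bracketings describe the same merges of three traces: an action may overtake the
pending actions of earlier traces only if none of them lies on its lifeline. Since a weak
sequencing of two traces contains exactly their actions, a conflict with it is a conflict with one
of them, and induction on the outer weak sequencing converts either bracketing into the other. -/

namespace WeakSeq

variable {θ : A → L} {t1 t2 t3 t12 t23 t : List A}

theorem mem_iff (h : WeakSeq θ t1 t2 t) (a : A) : a ∈ t ↔ a ∈ t1 ∨ a ∈ t2 := by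
  induction h with
  | nil_left => simp
  | nil_right => simp
  | cons_left _ _ ih => simp only [List.mem_cons, ih]; tauto
  | cons_right _ _ _ ih => simp only [List.mem_cons, ih]; tauto

theorem conflict_iff (h : WeakSeq θ t1 t2 t) (l : L) :
    Conflict θ t l ↔ Conflict θ t1 l ∨ Conflict θ t2 l := by
  simp only [Conflict, h.mem_iff, or_and_right, exists_or]

theorem eq_nil (h : WeakSeq θ t1 t2 []) : t1 = [] ∧ t2 = [] := by
  cases h <;> simp

theorem exists_right_of_left (h12 : WeakSeq θ t1 t2 t12) (h : WeakSeq θ t12 t3 t) :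
    ∃ t23, WeakSeq θ t2 t3 t23 ∧ WeakSeq θ t1 t23 t := by
  induction h generalizing t1 t2 with
  | nil_left t =>
    obtain ⟨rfl, rfl⟩ := h12.eq_nil
    exact ⟨t, nil_left t, nil_left t⟩
  | nil_right => exact ⟨t2, nil_right t2, h12⟩
  | cons_left a h ih =>
    cases h12 with
    | nil_left => exact ⟨_, cons_left a h, nil_left _⟩
    | nil_right =>
      obtain ⟨t23, h23, h1⟩ := ih (nil_right _)
      exact ⟨t23, h23, cons_left a h1⟩
    | cons_left _ h12 =>
      obtain ⟨t23, h23, h1⟩ := ih h12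
      exact ⟨t23, h23, cons_left a h1⟩
    | cons_right _ h12 hc =>
      obtain ⟨t23, h23, h1⟩ := ih h12
      exact ⟨a :: t23, cons_left a h23, cons_right a h1 hc⟩
  | cons_right a _ hc ih =>
    obtain ⟨t23, h23, h1⟩ := ih h12
    rw [h12.conflict_iff, not_or] at hc
    exact ⟨a :: t23, cons_right a h23 hc.2, cons_right a h1 hc.1⟩

theorem exists_left_of_right (h23 : WeakSeq θ t2 t3 t23) (h : WeakSeq θ t1 t23 t) :
    ∃ t12, WeakSeq θ t1 t2 t12 ∧ WeakSeq θ t12 t3 t := by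
  induction h generalizing t2 t3 with
  | nil_left => exact ⟨t2, nil_left t2, h23⟩
  | nil_right t =>
    obtain ⟨rfl, rfl⟩ := h23.eq_nil
    exact ⟨t, nil_right t, nil_right t⟩
  | cons_left a _ ih =>
    obtain ⟨t12, h12, h3⟩ := ih h23
    exact ⟨a :: t12, cons_left a h12, cons_left a h3⟩
  | cons_right a h hc ih =>
    cases h23 with
    | nil_left => exact ⟨_, nil_right _, cons_right a h hc⟩
    | nil_right =>
      obtain ⟨t12, h12, h3⟩ := ih (nil_right _)
      exact ⟨a :: t12, cons_right a h12 hc, cons_left a h3⟩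
    | cons_left _ h23 =>
      obtain ⟨t12, h12, h3⟩ := ih h23
      exact ⟨a :: t12, cons_right a h12 hc, cons_left a h3⟩
    | cons_right _ h23 hc2 =>
      obtain ⟨t12, h12, h3⟩ := ih h23
      refine ⟨t12, h12, cons_right a h3 ?_⟩
      rw [h12.conflict_iff]
      exact not_or.2 ⟨hc, hc2⟩

end WeakSeq

theorem weakS_assoc {A : Type u} {L : Type v} (θ : A → L) (T1 T2 T3 : Set (List A)) :
    weakS θ (weakS θ T1 T2) T3 = weakS θ T1 (weakS θ T2 T3) := by
  ext t
  constructor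
  · rintro ⟨t12, ⟨t1, h1, t2, h2, h12⟩, t3, h3, h⟩
    obtain ⟨t23, h23, h⟩ := h12.exists_right_of_left h
    exact ⟨t1, h1, t23, ⟨t2, h2, t3, h3, h23⟩, h⟩
  · rintro ⟨t1, h1, t23, ⟨t2, h2, t3, h3, h23⟩, h⟩
    obtain ⟨t12, h12, h⟩ := h23.exists_left_of_right h
    exact ⟨t12, ⟨t1, h1, t2, h2, h12⟩, t3, h3, h⟩
end

section
/- The conflict predicate distributes over weak sequencing: for any traces t1, t2, any trace t ∈ t1 ;w t2, and any lifeline l, t ⋈ l if and only if (t1 ⋈ l or t2 ⋈ l). -/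
universe u v
variable {A : Type u} {L : Type v}

theorem WeakSeq.interl {θ : A → L} {t1 t2 t : List A} (h : WeakSeq θ t1 t2 t) :
    Interl t1 t2 t := by
  induction h with
  | nil_left t => exact .nil_left t
  | nil_right t => exact .nil_right t
  | cons_left a _ ih => exact .cons_left a ih
  | cons_right a _ _ ih => exact .cons_right a ih

theorem Interl.perm_append {t1 t2 t : List A} (h : Interl t1 t2 t) : t.Perm (t1 ++ t2) := by
  induction h with
  | nil_left t => rfl
  | nil_right t => rw [List.append_nil]
  | cons_left a _ ih => exact ih.cons a
  | cons_right a _ ih => exact (ih.cons a).trans List.perm_middle.symm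

theorem List.Perm.conflict_iff {θ : A → L} {s t : List A} (h : s.Perm t) (l : L) :
    Conflict θ s l ↔ Conflict θ t l := by
  simp only [Conflict, h.mem_iff]

theorem conflict_append (θ : A → L) (t1 t2 : List A) (l : L) :
    Conflict θ (t1 ++ t2) l ↔ Conflict θ t1 l ∨ Conflict θ t2 l := by
  simp only [Conflict, List.mem_append, or_and_right, exists_or]

theorem conflict_weakSeq {A : Type u} {L : Type v} (θ : A → L) {t1 t2 t : List A}
    (h : WeakSeq θ t1 t2 t) (l : L) :
    Conflict θ t l ↔ Conflict θ t1 l ∨ Conflict θ t2 l := by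
  rw [h.interl.perm_append.conflict_iff, conflict_append]
end

section
/- For the interleaving closure: if a.t belongs to the Kleene closure T^{||*} of a set of traces T, then there exists a trace t' such that a.t' ∈ T and t ∈ {t'} || T^{||*}. -/
universe u v
variable {A : Type u} {L : Type v}

/- A trace of `T^{||(n+1)} = T || T^{||n}` starts either with a trace of `T` or with one of
`T^{||n}`. In the second case induction gives `a.t' ∈ T` whose tail `t'` is interleaved with the
rest, and since interleaving is left-commutative, the remaining components can be regrouped into a
single element of `T || T^{||*} ⊆ T^{||*}`. -/

namespace Interl

theorem eq_nil_of_nil {t₁ t₂ : List A} (h : Interl t₁ t₂ []) : t₁ = [] ∧ t₂ = [] := by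
  cases h <;> simp

theorem cons_inv {a : A} {t₁ t₂ t : List A} (h : Interl t₁ t₂ (a :: t)) :
    (∃ t₁', t₁ = a :: t₁' ∧ Interl t₁' t₂ t) ∨ (∃ t₂', t₂ = a :: t₂' ∧ Interl t₁ t₂' t) := by
  cases h with
  | nil_left => exact .inr ⟨t, rfl, .nil_left t⟩
  | nil_right => exact .inl ⟨t, rfl, .nil_right t⟩
  | cons_left _ h => exact .inl ⟨_, rfl, h⟩
  | cons_right _ h => exact .inr ⟨_, rfl, h⟩

theorem left_comm {t₁ t₂ t₃ t₂₃ t : List A} (h : Interl t₁ t₂₃ t) (h₂₃ : Interl t₂ t₃ t₂₃) :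
    ∃ u, Interl t₁ t₃ u ∧ Interl t₂ u t := by
  induction h generalizing t₂ t₃ with
  | nil_left t => exact ⟨t₃, .nil_left t₃, h₂₃⟩
  | nil_right t =>
    obtain ⟨rfl, rfl⟩ := eq_nil_of_nil h₂₃
    exact ⟨t, .nil_right t, .nil_left t⟩
  | cons_left a _ ih =>
    obtain ⟨u, hu₁₃, hu⟩ := ih h₂₃
    exact ⟨a :: u, .cons_left a hu₁₃, .cons_right a hu⟩
  | cons_right a _ ih =>
    rcases cons_inv h₂₃ with ⟨t₂', rfl, h₂₃'⟩ | ⟨t₃', rfl, h₂₃'⟩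
    · obtain ⟨u, hu₁₃, hu⟩ := ih h₂₃'
      exact ⟨u, hu₁₃, .cons_left a hu⟩
    · obtain ⟨u, hu₁₃, hu⟩ := ih h₂₃'
      exact ⟨a :: u, .cons_right a hu₁₃, .cons_right a hu⟩

end Interl

theorem mem_kleene_iff {op : Set (List A) → Set (List A) → Set (List A)} {T : Set (List A)}
    {t : List A} : t ∈ kleene op T ↔ ∃ n, t ∈ power op T n :=
  Set.mem_iUnion

theorem power_subset_kleene (op : Set (List A) → Set (List A) → Set (List A)) (T : Set (List A))
    (n : ℕ) : power op T n ⊆ kleene op T :=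
  Set.subset_iUnion (power op T) n

theorem interlS_mono_right {T₁ T₂ T₂' : Set (List A)} (h : T₂ ⊆ T₂') :
    interlS T₁ T₂ ⊆ interlS T₁ T₂' := by
  rintro t ⟨t₁, ht₁, t₂, ht₂, ht⟩
  exact ⟨t₁, ht₁, t₂, h ht₂, ht⟩

theorem interlS_left_comm (T₁ T₂ T₃ : Set (List A)) :
    interlS T₁ (interlS T₂ T₃) ⊆ interlS T₂ (interlS T₁ T₃) := by
  rintro t ⟨t₁, ht₁, t₂₃, ⟨t₂, ht₂, t₃, ht₃, h₂₃⟩, ht⟩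
  obtain ⟨u, hu₁₃, hu⟩ := ht.left_comm h₂₃
  exact ⟨t₂, ht₂, u, ⟨t₁, ht₁, t₃, ht₃, hu₁₃⟩, hu⟩

theorem interlS_kleene_subset (T : Set (List A)) :
    interlS T (kleene interlS T) ⊆ kleene interlS T := by
  rintro t ⟨t₁, ht₁, t₂, ht₂, ht⟩
  obtain ⟨n, ht₂⟩ := mem_kleene_iff.1 ht₂
  exact power_subset_kleene _ T (n + 1) ⟨t₁, ht₁, t₂, ht₂, ht⟩

theorem cons_mem_interlS {T₁ T₂ : Set (List A)} {a : A} {t : List A}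
    (h : a :: t ∈ interlS T₁ T₂) :
    (∃ t₁, a :: t₁ ∈ T₁ ∧ t ∈ interlS {t₁} T₂) ∨ (∃ t₂, a :: t₂ ∈ T₂ ∧ t ∈ interlS T₁ {t₂}) := by
  obtain ⟨t₁, ht₁, t₂, ht₂, ht⟩ := h
  rcases ht.cons_inv with ⟨t₁', rfl, ht'⟩ | ⟨t₂', rfl, ht'⟩
  · exact .inl ⟨t₁', ht₁, t₁', rfl, t₂, ht₂, ht'⟩
  · exact .inr ⟨t₂', ht₂, t₁, ht₁, t₂', rfl, ht'⟩

theorem cons_mem_power_interlS {T : Set (List A)} {a : A} (n : ℕ) {t : List A}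
    (h : a :: t ∈ power interlS T n) :
    ∃ t', a :: t' ∈ T ∧ t ∈ interlS {t'} (kleene interlS T) := by
  induction n generalizing t with
  | zero => simp [power] at h
  | succ n ih =>
    rcases cons_mem_interlS h with ⟨t₁, ht₁, ht⟩ | ⟨t₂, ht₂, ht⟩
    · exact ⟨t₁, ht₁, interlS_mono_right (power_subset_kleene _ T n) ht⟩
    · obtain ⟨t', ht', ht₂'⟩ := ih ht₂
      have ht : t ∈ interlS T (interlS {t'} (kleene interlS T)) :=
        interlS_mono_right (Set.singleton_subset_iff.2 ht₂') ht
      exact ⟨t', ht', interlS_mono_right (interlS_kleene_subset T) (interlS_left_comm _ _ _ ht)⟩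

theorem kleene_interl_head {A : Type u} (T : Set (List A)) (a : A) (t : List A)
    (h : a :: t ∈ kleene interlS T) :
    ∃ t' : List A, a :: t' ∈ T ∧ t ∈ interlS {t'} (kleene interlS T) := by
  obtain ⟨n, hn⟩ := mem_kleene_iff.1 h
  exact cons_mem_power_interlS n hn
end

section
/- The weak head-first closure and the weak Kleene closure differ: with two lifelines l1 ≠ l2 and actions l1!m1, l2?m1, l2!m2, letting T = {l1!m1.l2?m1, l2!m2}, the trace l1!m1.l2!m2.l2?m1 belongs to T^{;w*} but not to T^{;w↰*}; hence T^{;w*} ⊄ T^{;w↰*}. -/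
universe u v
variable {A : Type u} {L : Type v}

/-!
Weak sequencing lets `l1!m1`, taken from the right trace `l1!m1.l2?m1`, overtake the left trace
`l2!m2`, which lives on another lifeline; this gives `l1!m1.l2!m2.l2?m1` in `T ;w T`. In the
head-first closure the first action `l1!m1` must be the head of a trace of `T`, leaving `l2?m1`
to be weakly sequenced before the rest; but then `l2!m2` would have to overtake `l2?m1` on the
same lifeline `l2`, which weak sequencing forbids.
-/

@[simp]
theorem conflict_singleton_iff (θ : A → L) (b : A) (l : L) : Conflict θ [b] l ↔ θ b = l := by
  simp [Conflict]

namespace WeakSeq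

variable {θ : A → L}

theorem append (t1 t2 : List A) : WeakSeq θ t1 t2 (t1 ++ t2) := by
  induction t1 with
  | nil => exact nil_left t2
  | cons a t1 ih => exact cons_left a ih

theorem exists_of_cons_of_ne {a b : A} {t1 t2 t : List A} (h : WeakSeq θ (b :: t1) t2 (a :: t))
    (hab : a ≠ b) : ∃ t2', WeakSeq θ (b :: t1) t2' t := by
  cases h with
  | nil_right => exact absurd rfl hab
  | cons_left _ _ => exact absurd rfl hab
  | cons_right _ h _ => exact ⟨_, h⟩

theorem eq_of_cons_of_lifeline_eq {a b : A} {t1 t2 t : List A}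
    (h : WeakSeq θ (b :: t1) t2 (a :: t)) (hθ : θ a = θ b) : a = b := by
  cases h with
  | nil_right => rfl
  | cons_left _ _ => rfl
  | cons_right _ _ hnc => exact absurd ⟨b, List.mem_cons_self, hθ.symm⟩ hnc

end WeakSeq

theorem mem_kleene_of_mem_power {op : Set (List A) → Set (List A) → Set (List A)}
    {T : Set (List A)} {t : List A} (n : ℕ) (h : t ∈ power op T n) : t ∈ kleene op T :=
  Set.mem_iUnion.2 ⟨n, h⟩

theorem mem_power_weakS_one {θ : A → L} {T : Set (List A)} {t : List A} (h : t ∈ T) :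
    t ∈ power (weakS θ) T 1 :=
  ⟨t, h, [], rfl, WeakSeq.nil_right t⟩

theorem exists_of_cons_mem_kleene_restr {op : Set (List A) → Set (List A) → Set (List A)}
    {T : Set (List A)} {a : A} {t : List A} (h : a :: t ∈ kleene (restr op) T) :
    ∃ n t1, a :: t1 ∈ T ∧ a :: t ∈ op {t1} (power (restr op) T n) := by
  obtain ⟨_, ⟨n, rfl⟩, hn⟩ := h
  cases n with
  | zero => simp [power] at hn
  | succ n =>
    obtain ⟨t1, ht1, hop⟩ := hn.2 a t rfl
    exact ⟨n, t1, ht1, hop⟩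

theorem weak_headfirst_ne_kleene {A : Type u} {L : Type v} (θ : A → L)
    (l1 l2 : L) (a1 a2 a3 : A) (hl : l1 ≠ l2)
    (h1 : θ a1 = l1) (h2 : θ a2 = l2) (h3 : θ a3 = l2) (ha : a2 ≠ a3) :
    [a1, a3, a2] ∈ kleene (weakS θ) ({[a1, a2], [a3]} : Set (List A)) ∧
      [a1, a3, a2] ∉ kleene (restr (weakS θ)) ({[a1, a2], [a3]} : Set (List A)) := by
  have h31 : θ a3 ≠ θ a1 := by rw [h1, h3]; exact hl.symm
  have h12 : a1 ≠ a2 := fun h => hl (by rw [← h1, h, h2])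
  constructor
  · have hw : WeakSeq θ [a3] [a1, a2] [a1, a3, a2] :=
      .cons_right a1 (.append [a3] [a2]) (by simpa using h31)
    exact mem_kleene_of_mem_power 2 ⟨[a3], by simp, [a1, a2], mem_power_weakS_one (by simp), hw⟩
  · intro hmem
    obtain ⟨n, t1, ht1, s1, hs1, s2, -, hw⟩ := exists_of_cons_mem_kleene_restr hmem
    obtain rfl : s1 = t1 := hs1
    obtain rfl : s1 = [a2] := by
      simp only [Set.mem_insert_iff, Set.mem_singleton_iff, List.cons.injEq] at ht1
      rcases ht1 with ⟨-, rfl⟩ | ⟨rfl, -⟩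
      · rfl
      · exact absurd rfl h31
    obtain ⟨s2', hw'⟩ := hw.exists_of_cons_of_ne h12
    exact ha (hw'.eq_of_cons_of_lifeline_eq (h3.trans h2.symm)).symm
end

section
/- Termination characterizes acceptance of the empty trace: for any interaction term i, the inductive termination predicate i↓ holds if and only if ε ∈ σ_d(i), where σ_d is the denotational trace semantics. -/
universe u v
variable {A : Type u} {L : Type v}

/-- Interaction terms. -/
inductive Interaction (A : Type u) : Type u
  | empty : Interaction A
  | act : A → Interaction A
  | strict : Interaction A → Interaction A → Interaction A
  | seq : Interaction A → Interaction A → Interaction A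
  | par : Interaction A → Interaction A → Interaction A
  | alt : Interaction A → Interaction A → Interaction A
  | loopX : Interaction A → Interaction A
  | loopH : Interaction A → Interaction A
  | loopS : Interaction A → Interaction A
  | loopP : Interaction A → Interaction A

/-- Denotational semantics of interactions. -/
def sem (θ : A → L) : Interaction A → Set (List A)
  | .empty => {[]}
  | .act a => {[a]}
  | .strict i1 i2 => concatS (sem θ i1) (sem θ i2)
  | .seq i1 i2 => weakS θ (sem θ i1) (sem θ i2)
  | .par i1 i2 => interlS (sem θ i1) (sem θ i2)
  | .alt i1 i2 => sem θ i1 ∪ sem θ i2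
  | .loopX i1 => kleene concatS (sem θ i1)
  | .loopH i1 => kleene (restr (weakS θ)) (sem θ i1)
  | .loopS i1 => kleene (weakS θ) (sem θ i1)
  | .loopP i1 => kleene interlS (sem θ i1)

/-- Termination predicate `i ↓`. -/
inductive Terminates : Interaction A → Prop
  | empty : Terminates .empty
  | alt_left {i1 i2 : Interaction A} : Terminates i1 → Terminates (.alt i1 i2)
  | alt_right {i1 i2 : Interaction A} : Terminates i2 → Terminates (.alt i1 i2)
  | strict {i1 i2 : Interaction A} : Terminates i1 → Terminates i2 → Terminates (.strict i1 i2)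
  | seq {i1 i2 : Interaction A} : Terminates i1 → Terminates i2 → Terminates (.seq i1 i2)
  | par {i1 i2 : Interaction A} : Terminates i1 → Terminates i2 → Terminates (.par i1 i2)
  | loopX (i1 : Interaction A) : Terminates (.loopX i1)
  | loopH (i1 : Interaction A) : Terminates (.loopH i1)
  | loopS (i1 : Interaction A) : Terminates (.loopS i1)
  | loopP (i1 : Interaction A) : Terminates (.loopP i1)

/-- Evasion predicate `i ↓w l`. -/
inductive Evades (θ : A → L) : Interaction A → L → Prop
  | empty (l : L) : Evades θ .empty l
  | act {a : A} {l : L} : θ a ≠ l → Evades θ (.act a) l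
  | alt_left {i1 i2 : Interaction A} {l : L} : Evades θ i1 l → Evades θ (.alt i1 i2) l
  | alt_right {i1 i2 : Interaction A} {l : L} : Evades θ i2 l → Evades θ (.alt i1 i2) l
  | strict {i1 i2 : Interaction A} {l : L} :
      Evades θ i1 l → Evades θ i2 l → Evades θ (.strict i1 i2) l
  | seq {i1 i2 : Interaction A} {l : L} :
      Evades θ i1 l → Evades θ i2 l → Evades θ (.seq i1 i2) l
  | par {i1 i2 : Interaction A} {l : L} :
      Evades θ i1 l → Evades θ i2 l → Evades θ (.par i1 i2) l
  | loopX (i1 : Interaction A) (l : L) : Evades θ (.loopX i1) l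
  | loopH (i1 : Interaction A) (l : L) : Evades θ (.loopH i1) l
  | loopS (i1 : Interaction A) (l : L) : Evades θ (.loopS i1) l
  | loopP (i1 : Interaction A) (l : L) : Evades θ (.loopP i1) l

/-- Pruning relation `i ⇝_l i'`. -/
inductive Prune (θ : A → L) (l : L) : Interaction A → Interaction A → Prop
  | empty : Prune θ l .empty .empty
  | act {a : A} : θ a ≠ l → Prune θ l (.act a) (.act a)
  | strict {i1 i2 i1' i2' : Interaction A} :
      Prune θ l i1 i1' → Prune θ l i2 i2' → Prune θ l (.strict i1 i2) (.strict i1' i2')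
  | seq {i1 i2 i1' i2' : Interaction A} :
      Prune θ l i1 i1' → Prune θ l i2 i2' → Prune θ l (.seq i1 i2) (.seq i1' i2')
  | par {i1 i2 i1' i2' : Interaction A} :
      Prune θ l i1 i1' → Prune θ l i2 i2' → Prune θ l (.par i1 i2) (.par i1' i2')
  | alt_both {i1 i2 i1' i2' : Interaction A} :
      Prune θ l i1 i1' → Prune θ l i2 i2' → Prune θ l (.alt i1 i2) (.alt i1' i2')
  | alt_left {i1 i2 i1' : Interaction A} :
      Prune θ l i1 i1' → ¬ Evades θ i2 l → Prune θ l (.alt i1 i2) i1'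
  | alt_right {i1 i2 i2' : Interaction A} :
      Prune θ l i2 i2' → ¬ Evades θ i1 l → Prune θ l (.alt i1 i2) i2'
  | loopX {i1 i1' : Interaction A} : Prune θ l i1 i1' → Prune θ l (.loopX i1) (.loopX i1')
  | loopH {i1 i1' : Interaction A} : Prune θ l i1 i1' → Prune θ l (.loopH i1) (.loopH i1')
  | loopS {i1 i1' : Interaction A} : Prune θ l i1 i1' → Prune θ l (.loopS i1) (.loopS i1')
  | loopP {i1 i1' : Interaction A} : Prune θ l i1 i1' → Prune θ l (.loopP i1) (.loopP i1')
  | loopX_elim {i1 : Interaction A} : ¬ Evades θ i1 l → Prune θ l (.loopX i1) .empty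
  | loopH_elim {i1 : Interaction A} : ¬ Evades θ i1 l → Prune θ l (.loopH i1) .empty
  | loopS_elim {i1 : Interaction A} : ¬ Evades θ i1 l → Prune θ l (.loopS i1) .empty
  | loopP_elim {i1 : Interaction A} : ¬ Evades θ i1 l → Prune θ l (.loopP i1) .empty

/-- Execution relation `i →a i'`. -/
inductive Exec (θ : A → L) : Interaction A → A → Interaction A → Prop
  | act (a : A) : Exec θ (.act a) a .empty
  | alt_left {i1 i2 i1' : Interaction A} {a : A} :
      Exec θ i1 a i1' → Exec θ (.alt i1 i2) a i1'
  | alt_right {i1 i2 i2' : Interaction A} {a : A} :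
      Exec θ i2 a i2' → Exec θ (.alt i1 i2) a i2'
  | par_left {i1 i2 i1' : Interaction A} {a : A} :
      Exec θ i1 a i1' → Exec θ (.par i1 i2) a (.par i1' i2)
  | par_right {i1 i2 i2' : Interaction A} {a : A} :
      Exec θ i2 a i2' → Exec θ (.par i1 i2) a (.par i1 i2')
  | strict_left {i1 i2 i1' : Interaction A} {a : A} :
      Exec θ i1 a i1' → Exec θ (.strict i1 i2) a (.strict i1' i2)
  | strict_right {i1 i2 i2' : Interaction A} {a : A} :
      Exec θ i2 a i2' → Terminates i1 → Exec θ (.strict i1 i2) a i2'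
  | seq_left {i1 i2 i1' : Interaction A} {a : A} :
      Exec θ i1 a i1' → Exec θ (.seq i1 i2) a (.seq i1' i2)
  | seq_right {i1 i2 i1' i2' : Interaction A} {a : A} :
      Prune θ (θ a) i1 i1' → Exec θ i2 a i2' → Exec θ (.seq i1 i2) a (.seq i1' i2')
  | loopX {i1 i1' : Interaction A} {a : A} :
      Exec θ i1 a i1' → Exec θ (.loopX i1) a (.strict i1' (.loopX i1))
  | loopH {i1 i1' : Interaction A} {a : A} :
      Exec θ i1 a i1' → Exec θ (.loopH i1) a (.seq i1' (.loopH i1))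
  | loopS {i1 i1' i' : Interaction A} {a : A} :
      Exec θ i1 a i1' → Prune θ (θ a) (.loopS i1) i' →
      Exec θ (.loopS i1) a (.seq i' (.seq i1' (.loopS i1)))
  | loopP {i1 i1' : Interaction A} {a : A} :
      Exec θ i1 a i1' → Exec θ (.loopP i1) a (.par i1' (.loopP i1))

/-- Operational semantics `σ_o`. -/
inductive SemO (θ : A → L) : Interaction A → List A → Prop
  | empty {i : Interaction A} : Terminates i → SemO θ i []
  | step {i i' : Interaction A} {a : A} {t : List A} :
      Exec θ i a i' → SemO θ i' t → SemO θ i (a :: t)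

lemma Interl.nil_iff {t1 t2 : List A} : Interl t1 t2 [] ↔ t1 = [] ∧ t2 = [] :=
  ⟨fun h => by cases h <;> simp, by rintro ⟨rfl, rfl⟩; exact .nil_left []⟩

lemma WeakSeq.nil_iff {θ : A → L} {t1 t2 : List A} :
    WeakSeq θ t1 t2 [] ↔ t1 = [] ∧ t2 = [] :=
  ⟨fun h => by cases h <;> simp, by rintro ⟨rfl, rfl⟩; exact .nil_left []⟩

lemma nil_mem_concatS_iff {T1 T2 : Set (List A)} :
    [] ∈ concatS T1 T2 ↔ [] ∈ T1 ∧ [] ∈ T2 := by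
  simp [concatS, eq_comm (a := ([] : List A))]

lemma nil_mem_weakS_iff {θ : A → L} {T1 T2 : Set (List A)} :
    [] ∈ weakS θ T1 T2 ↔ [] ∈ T1 ∧ [] ∈ T2 := by
  simp [weakS, WeakSeq.nil_iff]

lemma nil_mem_interlS_iff {T1 T2 : Set (List A)} :
    [] ∈ interlS T1 T2 ↔ [] ∈ T1 ∧ [] ∈ T2 := by
  simp [interlS, Interl.nil_iff]

lemma nil_mem_kleene (op : Set (List A) → Set (List A) → Set (List A)) (T : Set (List A)) :
    [] ∈ kleene op T :=
  Set.mem_iUnion.mpr ⟨0, rfl⟩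

theorem terminates_iff_nil_mem_sem {A : Type u} {L : Type v} (θ : A → L) (i : Interaction A) :
    Terminates i ↔ ([] : List A) ∈ sem θ i := by
  induction i with
  | empty => exact ⟨fun _ => rfl, fun _ => .empty⟩
  | act a => exact ⟨nofun, nofun⟩
  | strict i1 i2 ih1 ih2 =>
    rw [sem, nil_mem_concatS_iff, ← ih1, ← ih2]
    exact ⟨fun | .strict h1 h2 => ⟨h1, h2⟩, fun ⟨h1, h2⟩ => .strict h1 h2⟩
  | seq i1 i2 ih1 ih2 =>
    rw [sem, nil_mem_weakS_iff, ← ih1, ← ih2]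
    exact ⟨fun | .seq h1 h2 => ⟨h1, h2⟩, fun ⟨h1, h2⟩ => .seq h1 h2⟩
  | par i1 i2 ih1 ih2 =>
    rw [sem, nil_mem_interlS_iff, ← ih1, ← ih2]
    exact ⟨fun | .par h1 h2 => ⟨h1, h2⟩, fun ⟨h1, h2⟩ => .par h1 h2⟩
  | alt i1 i2 ih1 ih2 =>
    rw [sem, Set.mem_union, ← ih1, ← ih2]
    exact ⟨fun | .alt_left h => .inl h | .alt_right h => .inr h,
      fun h => h.elim .alt_left .alt_right⟩
  | loopX i1 => exact ⟨fun _ => nil_mem_kleene _ _, fun _ => .loopX i1⟩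
  | loopH i1 => exact ⟨fun _ => nil_mem_kleene _ _, fun _ => .loopH i1⟩
  | loopS i1 => exact ⟨fun _ => nil_mem_kleene _ _, fun _ => .loopS i1⟩
  | loopP i1 => exact ⟨fun _ => nil_mem_kleene _ _, fun _ => .loopP i1⟩
end

section
/- Termination implies evasion: for any interaction term i, if i↓ then for every lifeline l, i ↓w l; moreover the converse fails, e.g. for i = alt(l1!m, l2!m) with two lifelines l1 ≠ l2, i evades every lifeline but does not terminate. -/
universe u v
variable {A : Type u} {L : Type v}

/-!
Every rule deriving `i ↓` has a counterpart deriving `i ↓w l` from the corresponding premises,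
so termination implies evasion by rule induction. The converse fails because `alt` needs only
one evading branch, and of two actions on distinct lifelines at least one avoids any given `l`.
-/

section

variable {θ : A → L}

theorem Terminates.evades {i : Interaction A} (h : Terminates i) (l : L) : Evades θ i l := by
  induction h with
  | empty => exact .empty l
  | alt_left _ ih => exact .alt_left ih
  | alt_right _ ih => exact .alt_right ih
  | strict _ _ ih1 ih2 => exact .strict ih1 ih2
  | seq _ _ ih1 ih2 => exact .seq ih1 ih2
  | par _ _ ih1 ih2 => exact .par ih1 ih2
  | loopX i1 => exact .loopX i1 l
  | loopH i1 => exact .loopH i1 l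
  | loopS i1 => exact .loopS i1 l
  | loopP i1 => exact .loopP i1 l

theorem not_terminates_act (a : A) : ¬ Terminates (Interaction.act a) := nofun

theorem terminates_alt_iff {i1 i2 : Interaction A} :
    Terminates (Interaction.alt i1 i2) ↔ Terminates i1 ∨ Terminates i2 := by
  constructor
  · intro h
    cases h with
    | alt_left h => exact .inl h
    | alt_right h => exact .inr h
  · rintro (h | h)
    exacts [.alt_left h, .alt_right h]

theorem evades_alt_act_act_of_ne {a1 a2 : A} (h : θ a1 ≠ θ a2) (l : L) :
    Evades θ (.alt (.act a1) (.act a2)) l := by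
  by_cases h1 : θ a1 = l
  · exact .alt_right (.act (h1 ▸ h.symm))
  · exact .alt_left (.act h1)

theorem not_terminates_alt_act_act (a1 a2 : A) :
    ¬ Terminates (Interaction.alt (.act a1) (.act a2)) := fun h =>
  (terminates_alt_iff.mp h).elim (not_terminates_act a1) (not_terminates_act a2)

end

theorem terminates_implies_evades {A : Type u} {L : Type v} (θ : A → L) :
    (∀ i : Interaction A, Terminates i → ∀ l : L, Evades θ i l) ∧
      (∀ (l1 l2 : L) (a1 a2 : A), l1 ≠ l2 → θ a1 = l1 → θ a2 = l2 →
        (∀ l : L, Evades θ (Interaction.alt (.act a1) (.act a2)) l) ∧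
          ¬ Terminates (Interaction.alt (Interaction.act a1) (Interaction.act a2))) :=
  ⟨fun _ h l => h.evades l, fun _ _ _ _ hne h1 h2 =>
    ⟨evades_alt_act_act_of_ne (h1 ▸ h2 ▸ hne), not_terminates_alt_act_act _ _⟩⟩
end
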